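/- arXiv:2410.02444 — 2 statements merged into one kernel-verified Lean document; each statement's English description precedes it below -/
import Mathlib

section
/- Let T be a nonnegative random variable with P(T = 0) = 0, strictly positive survival function G(t) = P(T > t), satisfying lim_{t→∞} G(t+a)/G(t) = e^{-βa} for all a ≥ 0 and some β ≥ 0. Fix α > 0 and define ℓ_t = inf{ℓ > 0 : e^{-αℓ} G(ℓ) ≤ e^{-αt}}. Then lim_{t→∞} e^{α(t - ℓ_t)} P(T > ℓ_t) = 1. -/
open MeasureTheory ProbabilityTheory Filter Set

theorem aux_main (G : ℝ → ℝ) (α β : ℝ) (hα : 0 < α) (hβ : 0 ≤ β)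
    (hGpos : ∀ l, 0 < G l) (hGle1 : ∀ l, G l ≤ 1) (hGanti : Antitone G)
    (hratio : ∀ a : ℝ, 0 ≤ a →
      Tendsto (fun t => G (t + a) / G t) atTop (nhds (Real.exp (-β * a))))
    (ℓ : ℝ → ℝ)
    (hℓ : ∀ t : ℝ, ℓ t = sInf {l : ℝ | 0 < l ∧
      Real.exp (-α * l) * G l ≤ Real.exp (-α * t)}) :
    Tendsto (fun t : ℝ => Real.exp (α * (t - ℓ t)) * G (ℓ t)) atTop (nhds 1) := by
  have hc0 : 0 < α + β := by linarith
  have hfanti : ∀ ⦃a b : ℝ⦄, a ≤ b →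
      Real.exp (-α * b) * G b ≤ Real.exp (-α * a) * G a := by
    intro a b hab
    exact mul_le_mul (Real.exp_le_exp.2 (by nlinarith)) (hGanti hab) (hGpos b).le
      (Real.exp_pos _).le
  have hSne : ∀ t : ℝ, Set.Nonempty {l : ℝ | 0 < l ∧
      Real.exp (-α * l) * G l ≤ Real.exp (-α * t)} := by
    intro t
    refine ⟨max t 1, lt_of_lt_of_le one_pos (le_max_right _ _), ?_⟩
    calc Real.exp (-α * max t 1) * G (max t 1) ≤ Real.exp (-α * max t 1) * 1 :=
          mul_le_mul_of_nonneg_left (hGle1 _) (Real.exp_pos _).le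
      _ = Real.exp (-α * max t 1) := mul_one _
      _ ≤ Real.exp (-α * t) := Real.exp_le_exp.2 (by nlinarith [le_max_left t 1])
  have hSbdd : ∀ t : ℝ, BddBelow {l : ℝ | 0 < l ∧
      Real.exp (-α * l) * G l ≤ Real.exp (-α * t)} :=
    fun t => ⟨0, fun l hl => hl.1.le⟩
  have hmem : ∀ t δ : ℝ, 0 < δ →
      Real.exp (-α * (ℓ t + δ)) * G (ℓ t + δ) ≤ Real.exp (-α * t) := by
    intro t δ hδ
    obtain ⟨l, hlS, hl⟩ := exists_lt_of_csInf_lt (hSne t)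
      (show sInf _ < ℓ t + δ by rw [← hℓ t]; linarith)
    exact le_trans (hfanti hl.le) hlS.2
  have hnotmem : ∀ t l : ℝ, 0 < l → l < ℓ t →
      Real.exp (-α * t) < Real.exp (-α * l) * G l := by
    intro t l hl0 hl
    by_contra h
    push_neg at h
    have : ℓ t ≤ l := by rw [hℓ t]; exact csInf_le (hSbdd t) ⟨hl0, h⟩
    linarith
  have hℓtop : Tendsto ℓ atTop atTop := by
    rw [tendsto_atTop]
    intro M
    set M' := max M 1 with hM'
    have hfM : 0 < Real.exp (-α * M') * G M' := mul_pos (Real.exp_pos _) (hGpos _)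
    have htend0 : Tendsto (fun t : ℝ => Real.exp (-α * t)) atTop (nhds 0) := by
      have h1 : Tendsto (fun t : ℝ => α * t) atTop atTop :=
        Tendsto.const_mul_atTop hα tendsto_id
      have h2 := Real.tendsto_exp_neg_atTop_nhds_zero.comp h1
      have heq : (fun t : ℝ => Real.exp (-α * t)) =
          (fun x => Real.exp (-x)) ∘ fun t : ℝ => α * t := by
        funext t; simp [Function.comp, neg_mul]
      rw [heq]; exact h2
    have hev := htend0.eventually_lt_const hfM
    filter_upwards [hev] with t ht
    have hM'le : M' ≤ ℓ t := by
      rw [hℓ t]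
      apply le_csInf (hSne t)
      intro l hl
      by_contra hcon
      push_neg at hcon
      have h2 := hfanti hcon.le
      have h3 := hl.2
      linarith
    have := le_max_left M 1
    linarith
  have hratioℓ : ∀ δ : ℝ, 0 ≤ δ →
      Tendsto (fun t => G (ℓ t + δ) / G (ℓ t)) atTop (nhds (Real.exp (-β * δ))) :=
    fun δ hδ => (hratio δ hδ).comp hℓtop
  have hratioℓ' : ∀ δ : ℝ, 0 ≤ δ →
      Tendsto (fun t => G (ℓ t) / G (ℓ t - δ)) atTop (nhds (Real.exp (-β * δ))) := by
    intro δ hδ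
    have h1 : Tendsto (fun t => ℓ t - δ) atTop atTop :=
      tendsto_atTop_add_const_right _ (-δ) hℓtop
    have h2 := (hratio δ hδ).comp h1
    simp only [Function.comp_def] at h2
    have heq : (fun t => G (ℓ t) / G (ℓ t - δ)) =
        fun t => G (ℓ t - δ + δ) / G (ℓ t - δ) := by
      funext t; rw [sub_add_cancel]
    rw [heq]; exact h2
  rw [Metric.tendsto_nhds]
  intro ε hε
  set ε' := min ε 1 / 2 with hε'def
  have hminpos : 0 < min ε 1 := lt_min hε one_pos
  have hε'pos : 0 < ε' := by rw [hε'def]; linarith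
  have hε'lt : ε' < ε := by
    have := min_le_left ε 1
    rw [hε'def]; linarith
  have h1ε' : (1:ℝ) < 1 + ε' := by linarith
  set δ := Real.log (1 + ε') / (α + β) with hδdef
  have hδpos : 0 < δ := div_pos (Real.log_pos h1ε') hc0
  have hecd : Real.exp ((α + β) * δ) = 1 + ε' := by
    have hcd : (α + β) * δ = Real.log (1 + ε') := by
      rw [hδdef]; field_simp
    rw [hcd, Real.exp_log (by linarith)]
  have hU : Tendsto (fun t => Real.exp (α * δ) * (G (ℓ t) / G (ℓ t + δ))) atTop
      (nhds (1 + ε')) := by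
    have h1 := hratioℓ δ hδpos.le
    have h2 := (h1.inv₀ (Real.exp_pos _).ne').const_mul (Real.exp (α * δ))
    have hfun : ∀ t, Real.exp (α * δ) * (G (ℓ t) / G (ℓ t + δ)) =
        Real.exp (α * δ) * (G (ℓ t + δ) / G (ℓ t))⁻¹ := fun t => by rw [inv_div]
    have hlim : Real.exp (α * δ) * (Real.exp (-β * δ))⁻¹ = 1 + ε' := by
      rw [← Real.exp_neg, ← Real.exp_add, ← hecd]; ring_nf
    simp only [hfun]
    rw [← hlim]
    exact h2
  have hL : Tendsto (fun t => Real.exp (-(α * δ)) * (G (ℓ t) / G (ℓ t - δ))) atTop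
      (nhds (Real.exp (-((α + β) * δ)))) := by
    have h2 := (hratioℓ' δ hδpos.le).const_mul (Real.exp (-(α * δ)))
    have hlim : Real.exp (-(α * δ)) * Real.exp (-β * δ) = Real.exp (-((α + β) * δ)) := by
      rw [← Real.exp_add]; ring_nf
    rw [← hlim]
    exact h2
  have hLgt : 1 - ε < Real.exp (-((α + β) * δ)) := by
    rw [Real.exp_neg, hecd]
    have hkey : (1 - ε) * (1 + ε') < 1 := by nlinarith
    have hinvpos : 0 < (1 + ε')⁻¹ := inv_pos.2 (by linarith)
    have hinv : (1 + ε') * (1 + ε')⁻¹ = 1 := mul_inv_cancel₀ (by linarith)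
    nlinarith
  have hUlt : 1 + ε' < 1 + ε := by linarith
  filter_upwards [hℓtop.eventually_gt_atTop δ, hU.eventually_lt_const hUlt,
    hL.eventually_const_lt hLgt] with t h1 h2 h3
  have hupper : Real.exp (α * (t - ℓ t)) * G (ℓ t) ≤
      Real.exp (α * δ) * (G (ℓ t) / G (ℓ t + δ)) := by
    have hA := hmem t δ hδpos
    have hstep : G (ℓ t + δ) ≤ Real.exp (α * (ℓ t + δ) - α * t) := by
      have h4 : G (ℓ t + δ) ≤ Real.exp (-α * t) / Real.exp (-α * (ℓ t + δ)) := by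
        rw [le_div_iff₀ (Real.exp_pos _)]
        linarith [hA, mul_comm (Real.exp (-α * (ℓ t + δ))) (G (ℓ t + δ))]
      rwa [← Real.exp_sub, show -α * t - -α * (ℓ t + δ) = α * (ℓ t + δ) - α * t by ring] at h4
    rw [← mul_div_assoc, le_div_iff₀ (hGpos _)]
    have hmul : Real.exp (α * (t - ℓ t)) * Real.exp (α * (ℓ t + δ) - α * t) =
        Real.exp (α * δ) := by rw [← Real.exp_add]; ring_nf
    calc Real.exp (α * (t - ℓ t)) * G (ℓ t) * G (ℓ t + δ)
        ≤ Real.exp (α * (t - ℓ t)) * G (ℓ t) * Real.exp (α * (ℓ t + δ) - α * t) := by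
          exact mul_le_mul_of_nonneg_left hstep
            (mul_nonneg (Real.exp_pos _).le (hGpos _).le)
      _ = Real.exp (α * (t - ℓ t)) * Real.exp (α * (ℓ t + δ) - α * t) * G (ℓ t) := by ring
      _ = Real.exp (α * δ) * G (ℓ t) := by rw [hmul]
  have hlower : Real.exp (-(α * δ)) * (G (ℓ t) / G (ℓ t - δ)) ≤
      Real.exp (α * (t - ℓ t)) * G (ℓ t) := by
    have hB := hnotmem t (ℓ t - δ) (by linarith) (by linarith)
    have hstep : Real.exp (α * (ℓ t - δ) - α * t) ≤ G (ℓ t - δ) := by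
      have h4 : Real.exp (-α * t) / Real.exp (-α * (ℓ t - δ)) ≤ G (ℓ t - δ) := by
        rw [div_le_iff₀ (Real.exp_pos _)]
        nlinarith [hB]
      rwa [← Real.exp_sub, show -α * t - -α * (ℓ t - δ) = α * (ℓ t - δ) - α * t by ring] at h4
    rw [← mul_div_assoc, div_le_iff₀ (hGpos _)]
    have hmul : Real.exp (α * (t - ℓ t)) * Real.exp (α * (ℓ t - δ) - α * t) =
        Real.exp (-(α * δ)) := by rw [← Real.exp_add]; ring_nf
    calc Real.exp (-(α * δ)) * G (ℓ t)
        = Real.exp (α * (t - ℓ t)) * Real.exp (α * (ℓ t - δ) - α * t) * G (ℓ t) := by rw [hmul]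
      _ ≤ Real.exp (α * (t - ℓ t)) * G (ℓ t - δ) * G (ℓ t) := by
          apply mul_le_mul_of_nonneg_right _ (hGpos _).le
          exact mul_le_mul_of_nonneg_left hstep (Real.exp_pos _).le
      _ = Real.exp (α * (t - ℓ t)) * G (ℓ t) * G (ℓ t - δ) := by ring
  rw [Real.dist_eq, abs_lt]
  constructor <;> linarith

/-- Lemma 2.1: `e^{α(t - ℓ_t)} P(T > ℓ_t) → 1` as `t → ∞`, where
`ℓ_t = inf{ℓ > 0 : e^{-αℓ} P(T > ℓ) ≤ e^{-αt}}`. -/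
theorem char_length_critical
    {Ω : Type*} [MeasurableSpace Ω] (P : Measure Ω) [IsProbabilityMeasure P]
    (T : Ω → ℝ) (hT : Measurable T) (α β : ℝ) (hα : 0 < α) (hβ : 0 ≤ β)
    (hT0 : P {ω | T ω ≤ 0} = 0)
    (hpos : ∀ t : ℝ, 0 < (P {ω | t < T ω}).toReal)
    (hratio : ∀ a : ℝ, 0 ≤ a →
      Tendsto (fun t : ℝ => (P {ω | t + a < T ω}).toReal / (P {ω | t < T ω}).toReal)
        atTop (nhds (Real.exp (-β * a))))
    (ℓ : ℝ → ℝ)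
    (hℓ : ∀ t : ℝ, ℓ t = sInf {l : ℝ | 0 < l ∧
      Real.exp (-α * l) * (P {ω | l < T ω}).toReal ≤ Real.exp (-α * t)}) :
    Tendsto (fun t : ℝ => Real.exp (α * (t - ℓ t)) * (P {ω | ℓ t < T ω}).toReal)
      atTop (nhds 1) := by
  have hGle1 : ∀ l : ℝ, (P {ω | l < T ω}).toReal ≤ 1 := by
    intro l
    calc (P {ω | l < T ω}).toReal ≤ (P univ).toReal :=
          ENNReal.toReal_mono (measure_ne_top _ _) (measure_mono (subset_univ _))
      _ = 1 := by simp
  have hGanti : Antitone (fun l : ℝ => (P {ω | l < T ω}).toReal) := by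
    intro a b hab
    exact ENNReal.toReal_mono (measure_ne_top _ _)
      (measure_mono (fun ω hω => lt_of_le_of_lt hab hω))
  exact aux_main (fun l => (P {ω | l < T ω}).toReal) α β hα hβ hpos hGle1 hGanti hratio ℓ hℓ
end

section
/- Under the same assumptions (α > 0, β ≥ 0, G(t) = P(T > t) > 0 for all t, and x ↦ G(log x) regularly varying at ∞ with index -β), the function ℓ_t = inf{ℓ > 0 : e^{-αℓ} G(ℓ) ≤ e^{-αt}} satisfies lim_{t→∞} ℓ_t / t = α/(α + β). -/
open MeasureTheory Filter Topology

/-!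
With `G l = P(T > l)` and `h l = α l - log G l`, the condition defining `ℓ_t` reads `α t ≤ h l`, so
`ℓ_t` is the generalized inverse of the nondecreasing function `h` at level `α t`. The ratio
assumption gives `h (l + 1) - h l → α + β`, hence `h l / l → α + β` by Cesàro averaging and
monotonicity; and the generalized inverse of a monotone function growing linearly with slope `κ`
grows linearly with slope `1 / κ`.
-/

theorem tendsto_div_natCast_of_tendsto_sub {u : ℕ → ℝ} {L : ℝ}
    (h : Tendsto (fun n => u (n + 1) - u n) atTop (𝓝 L)) :
    Tendsto (fun n : ℕ => u n / n) atTop (𝓝 L) := by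
  have hsum : Tendsto (fun n : ℕ => (n : ℝ)⁻¹ * (u n - u 0) + u 0 / n) atTop (𝓝 (L + 0)) := by
    refine (h.cesaro.congr fun n => ?_).add (tendsto_const_div_atTop_nhds_zero_nat (u 0))
    rw [Finset.sum_range_sub]
  rw [add_zero] at hsum
  exact hsum.congr fun n => by ring

theorem Monotone.tendsto_div_of_tendsto_div_natCast {h : ℝ → ℝ} {κ : ℝ} (hh : Monotone h)
    (hnat : Tendsto (fun n : ℕ => h n / n) atTop (𝓝 κ)) :
    Tendsto (fun t => h t / t) atTop (𝓝 κ) := by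
  have along : ∀ r : ℝ → ℕ, Tendsto r atTop atTop →
      Tendsto (fun t => (r t : ℝ) / t) atTop (𝓝 1) → Tendsto (fun t => h (r t) / t) atTop (𝓝 κ) := by
    intro r hr hr_div
    have hprod := (hnat.comp hr).mul hr_div
    rw [mul_one] at hprod
    refine hprod.congr' ?_
    filter_upwards [hr.eventually_gt_atTop 0] with t ht
    exact div_mul_div_cancel₀ (Nat.cast_ne_zero.2 ht.ne')
  refine tendsto_of_tendsto_of_tendsto_of_le_of_le'
    (along _ tendsto_nat_floor_atTop tendsto_nat_floor_div_atTop)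
    (along _ tendsto_nat_ceil_atTop tendsto_nat_ceil_div_atTop) ?_ ?_
  · filter_upwards [eventually_gt_atTop 0] with t ht
    exact div_le_div_of_nonneg_right (hh (Nat.floor_le ht.le)) ht.le
  · filter_upwards [eventually_gt_atTop 0] with t ht
    exact div_le_div_of_nonneg_right (hh (Nat.le_ceil t)) ht.le

theorem Monotone.tendsto_div_of_tendsto_sub_one {h : ℝ → ℝ} {κ : ℝ} (hh : Monotone h)
    (hinc : Tendsto (fun t => h (t + 1) - h t) atTop (𝓝 κ)) :
    Tendsto (fun t => h t / t) atTop (𝓝 κ) :=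
  hh.tendsto_div_of_tendsto_div_natCast <| tendsto_div_natCast_of_tendsto_sub <|
    (hinc.comp tendsto_natCast_atTop_atTop).congr fun n => by simp

noncomputable def generalizedInverse (h : ℝ → ℝ) (s : ℝ) : ℝ := sInf {l | 0 < l ∧ s ≤ h l}

section GeneralizedInverse

variable {h : ℝ → ℝ} {κ : ℝ}

theorem tendsto_comp_const_mul_div (hlim : Tendsto (fun l => h l / l) atTop (𝓝 κ)) {c : ℝ}
    (hc : 0 < c) : Tendsto (fun s => h (c * s) / s) atTop (𝓝 (c * κ)) := by
  refine ((hlim.comp (tendsto_id.const_mul_atTop hc)).const_mul c).congr' ?_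
  filter_upwards [eventually_ne_atTop 0] with s hs
  simp only [Function.comp_apply, id]
  field_simp

theorem eventually_mul_mem_of_one_lt_mul (hlim : Tendsto (fun l => h l / l) atTop (𝓝 κ))
    {c : ℝ} (hc : 0 < c) (hcκ : 1 < c * κ) : ∀ᶠ s in atTop, 0 < c * s ∧ s ≤ h (c * s) := by
  filter_upwards [(tendsto_comp_const_mul_div hlim hc).eventually (eventually_gt_nhds hcκ),
    eventually_gt_atTop 0] with s hs hs0
  exact ⟨mul_pos hc hs0, ((one_lt_div hs0).1 hs).le⟩

theorem eventually_generalizedInverse_le (hlim : Tendsto (fun l => h l / l) atTop (𝓝 κ))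
    {c : ℝ} (hc : 0 < c) (hcκ : 1 < c * κ) :
    ∀ᶠ s in atTop, generalizedInverse h s ≤ c * s := by
  filter_upwards [eventually_mul_mem_of_one_lt_mul hlim hc hcκ] with s hs
  exact csInf_le ⟨0, fun l hl => hl.1.le⟩ hs

theorem eventually_mul_le_generalizedInverse (hh : Monotone h)
    (hlim : Tendsto (fun l => h l / l) atTop (𝓝 κ)) (hκ : 0 < κ) {c : ℝ} (hc : 0 < c)
    (hcκ : c * κ < 1) : ∀ᶠ s in atTop, c * s ≤ generalizedInverse h s := by
  -- `2 / κ * s` makes the set nonempty, without which `sInf` would be the junk value `0`.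
  have htwo : 1 < 2 / κ * κ := by rw [div_mul_cancel₀ _ hκ.ne']; norm_num
  filter_upwards [(tendsto_comp_const_mul_div hlim hc).eventually (eventually_lt_nhds hcκ),
    eventually_mul_mem_of_one_lt_mul hlim (by positivity) htwo, eventually_gt_atTop 0]
    with s hs hne hs0
  refine le_csInf ⟨_, hne⟩ fun l hl => ?_
  by_contra! hlt
  exact ((div_lt_one hs0).1 hs).not_ge (hl.2.trans (hh hlt.le))

theorem tendsto_generalizedInverse_div (hh : Monotone h)
    (hlim : Tendsto (fun l => h l / l) atTop (𝓝 κ)) (hκ : 0 < κ) :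
    Tendsto (fun s => generalizedInverse h s / s) atTop (𝓝 κ⁻¹) := by
  refine tendsto_order.2 ⟨fun a ha => ?_, fun b hb => ?_⟩
  · obtain ⟨c, hac, hcκ⟩ := exists_between (max_lt ha (inv_pos.2 hκ))
    have hc : 0 < c := (le_max_right a 0).trans_lt hac
    have hcκ' : c * κ < 1 := (lt_inv_mul_iff₀' hκ).1 (by rwa [mul_one])
    filter_upwards [eventually_mul_le_generalizedInverse hh hlim hκ hc hcκ',
      eventually_gt_atTop 0] with s hs hs0
    exact ((le_max_left a 0).trans_lt hac).trans_le ((le_div_iff₀ hs0).2 hs)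
  · obtain ⟨c, hκc, hcb⟩ := exists_between hb
    have hc : 0 < c := (inv_pos.2 hκ).trans hκc
    filter_upwards [eventually_generalizedInverse_le hlim hc ((inv_lt_iff_one_lt_mul₀ hκ).1 hκc),
      eventually_gt_atTop 0] with s hs hs0
    exact ((div_le_iff₀ hs0).2 hs).trans_lt hcb

theorem tendsto_generalizedInverse_const_mul_div (hh : Monotone h)
    (hlim : Tendsto (fun l => h l / l) atTop (𝓝 κ)) (hκ : 0 < κ) {α : ℝ} (hα : 0 < α) :
    Tendsto (fun t => generalizedInverse h (α * t) / t) atTop (𝓝 (α / κ)) := by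
  have hcomp := ((tendsto_generalizedInverse_div hh hlim hκ).comp
    (tendsto_id.const_mul_atTop hα)).const_mul α
  rw [← div_eq_mul_inv] at hcomp
  refine hcomp.congr' ?_
  filter_upwards [eventually_ne_atTop 0] with t ht
  simp only [Function.comp_apply, id]
  field_simp

end GeneralizedInverse

theorem sInf_exp_mul_le_eq_generalizedInverse {G : ℝ → ℝ} (hG : ∀ l, 0 < G l) (α t : ℝ) :
    sInf {l : ℝ | 0 < l ∧ Real.exp (-α * l) * G l ≤ Real.exp (-α * t)} =
      generalizedInverse (fun l => α * l - Real.log (G l)) (α * t) := by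
  rw [generalizedInverse]
  congr 1
  ext l
  refine and_congr_right fun _ => ?_
  nth_rw 1 [← Real.exp_log (hG l)]
  rw [← Real.exp_add, Real.exp_le_exp]
  constructor <;> intro <;> linarith

theorem char_length_linear_growth_general
    {Ω : Type*} [MeasurableSpace Ω] (P : Measure Ω) [IsProbabilityMeasure P]
    (T : Ω → ℝ) (α β : ℝ) (hα : 0 < α) (hβ : 0 ≤ β)
    (hpos : ∀ t : ℝ, 0 < (P {ω | t < T ω}).toReal)
    (hratio : ∀ a : ℝ, 0 ≤ a →
      Tendsto (fun t : ℝ => (P {ω | t + a < T ω}).toReal / (P {ω | t < T ω}).toReal)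
        atTop (nhds (Real.exp (-β * a))))
    (ℓ : ℝ → ℝ)
    (hℓ : ∀ t : ℝ, ℓ t = sInf {l : ℝ | 0 < l ∧
      Real.exp (-α * l) * (P {ω | l < T ω}).toReal ≤ Real.exp (-α * t)}) :
    Tendsto (fun t : ℝ => ℓ t / t) atTop (nhds (α / (α + β))) := by
  set G : ℝ → ℝ := fun l => (P {ω | l < T ω}).toReal
  set h : ℝ → ℝ := fun l => α * l - Real.log (G l)
  have hG : Antitone G := fun a b hab => measureReal_mono fun ω hω => hab.trans_lt hω
  have hh : Monotone h := fun a b hab =>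
    sub_le_sub (by gcongr) (Real.log_le_log (hpos b) (hG hab))
  have hinc : Tendsto (fun l => h (l + 1) - h l) atTop (𝓝 (α + β)) := by
    have hlog := (hratio 1 zero_le_one).log (Real.exp_ne_zero _)
    rw [mul_one, Real.log_exp] at hlog
    rw [← sub_neg_eq_add]
    refine (hlog.const_sub α).congr fun l => ?_
    simp only [h, Real.log_div (hpos _).ne' (hpos _).ne']
    ring
  have hℓ_eq : ∀ t, ℓ t = generalizedInverse h (α * t) := fun t =>
    (hℓ t).trans (sInf_exp_mul_le_eq_generalizedInverse hpos α t)
  refine (tendsto_generalizedInverse_const_mul_div hh (hh.tendsto_div_of_tendsto_sub_one hinc)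
    (by linarith) hα).congr fun t => ?_
  rw [hℓ_eq]

/-- Lemma 2.2: under the regular-tail assumption, the characteristic length
`ℓ_t = inf{ℓ > 0 : e^{-αℓ} P(T > ℓ) ≤ e^{-αt}}` satisfies `ℓ_t / t → α/(α+β)`. -/
theorem char_length_linear_growth
    {Ω : Type*} [MeasurableSpace Ω] (P : Measure Ω) [IsProbabilityMeasure P]
    (T : Ω → ℝ) (hT : Measurable T) (α β : ℝ) (hα : 0 < α) (hβ : 0 ≤ β)
    (hT0 : P {ω | T ω ≤ 0} = 0)
    (hpos : ∀ t : ℝ, 0 < (P {ω | t < T ω}).toReal)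
    (hratio : ∀ a : ℝ, 0 ≤ a →
      Tendsto (fun t : ℝ => (P {ω | t + a < T ω}).toReal / (P {ω | t < T ω}).toReal)
        atTop (nhds (Real.exp (-β * a))))
    (ℓ : ℝ → ℝ)
    (hℓ : ∀ t : ℝ, ℓ t = sInf {l : ℝ | 0 < l ∧
      Real.exp (-α * l) * (P {ω | l < T ω}).toReal ≤ Real.exp (-α * t)}) :
    Tendsto (fun t : ℝ => ℓ t / t) atTop (nhds (α / (α + β))) :=
  char_length_linear_growth_general P T α β hα hβ hpos hratio ℓ hℓ
end
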